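/- arXiv:math/0110156 — 2 statements merged into one kernel-verified Lean document; each statement's English description precedes it below -/
import Mathlib

section
/- Let G be a finite group acting on a finite set X. Then (1/|G|) · Σ_{(g,h): gh=hg} |X^{⟨g,h⟩}| = Σ_{[g]} |X^g / C(g)|, where the first sum is over commuting pairs (g,h) ∈ G×G, X^{⟨g,h⟩} is the set of points fixed by both g and h, the second sum is over conjugacy classes [g] of G, X^g is the fixed-point set of g, and C(g) is the centralizer of g acting on X^g. -/
open Finset

/-- The set of orbits of the centralizer `C(g)` acting on the fixed-point set `X^g`,
encoded as the collection of orbit subsets of `X`. -/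
def centralizerOrbits {G X : Type*} [Group G] [MulAction G X] (g : G) : Set (Set X) :=
  {S : Set X | ∃ x : X, g • x = x ∧ S = {y : X | ∃ k : G, k * g = g * k ∧ y = k • x}}

namespace StringyAux

variable {G X : Type*} [Group G] [MulAction G X]

/-- The fixed points of `g` as a type. -/
abbrev Fg (X : Type*) [MulAction G X] (g : G) : Type _ := {x : X // g • x = x}

/-- The centralizer of `g`. -/
abbrev Cg (g : G) : Subgroup G := Subgroup.centralizer {g}

lemma mem_Cg {g k : G} : k ∈ Cg g ↔ k * g = g * k := by
  simp [Cg, Subgroup.mem_centralizer_iff, eq_comm]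

instance (g : G) : SMul (Cg g) (Fg X g) where
  smul k x := ⟨(k : G) • (x : X), by
    have hk : (k : G) * g = g * (k : G) := mem_Cg.mp k.2
    rw [smul_smul, ← hk, ← smul_smul, x.2]⟩

lemma smul_def (g : G) (k : Cg g) (x : Fg X g) : ((k • x : Fg X g) : X) = (k : G) • (x : X) := rfl

instance (g : G) : MulAction (Cg g) (Fg X g) where
  one_smul x := Subtype.ext (by rw [smul_def]; simp)
  mul_smul k l x := Subtype.ext (by simp only [smul_def]; rw [Subgroup.coe_mul, mul_smul])

/-- The orbit set of `x` under the centralizer. -/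
def orbSet (g : G) (x : Fg X g) : Set X := {y : X | ∃ k : G, k * g = g * k ∧ y = k • (x : X)}

lemma orbSet_mem (g : G) (x : Fg X g) : orbSet g x ∈ centralizerOrbits (X := X) g :=
  ⟨x.1, x.2, rfl⟩

lemma orbSet_const (g : G) :
    ∀ x y : Fg X g, MulAction.orbitRel (Cg g) (Fg X g) x y → orbSet g x = orbSet g y := by
  rintro x y ⟨c, rfl⟩
  ext z
  simp only [orbSet, Set.mem_setOf_eq, smul_def]
  constructor
  · rintro ⟨k, hk, rfl⟩
    refine ⟨k * c, ?_, by rw [mul_smul]⟩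
    have hc := mem_Cg.mp c.2
    rw [mul_assoc, hc, ← mul_assoc, hk, mul_assoc]
  · rintro ⟨k, hk, rfl⟩
    refine ⟨k * (c : G)⁻¹, ?_, ?_⟩
    · have hc : (c : G)⁻¹ * g = g * (c : G)⁻¹ := Commute.inv_left (mem_Cg.mp c.2)
      rw [mul_assoc, hc, ← mul_assoc, hk, mul_assoc]
    · rw [mul_smul, inv_smul_smul]

/-- The quotient of `X^g` by `C(g)` is equivalent to `centralizerOrbits g`. -/
noncomputable def quotEquiv (g : G) :
    Quotient (MulAction.orbitRel (Cg g) (Fg X g)) ≃ centralizerOrbits (X := X) g := by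
  refine Equiv.ofBijective
    (Quotient.lift (fun x => (⟨orbSet g x, orbSet_mem g x⟩ : centralizerOrbits (X := X) g))
      (fun x y h => Subtype.ext (orbSet_const g x y h))) ⟨?_, ?_⟩
  · rintro ⟨x⟩ ⟨y⟩ h
    have hxy : orbSet g x = orbSet g y := congrArg Subtype.val h
    have hx : (x : X) ∈ orbSet g x := ⟨1, by simp, by simp⟩
    rw [hxy] at hx
    obtain ⟨k, hk, hkx⟩ := hx
    refine Quotient.sound ⟨⟨k, mem_Cg.mpr hk⟩, ?_⟩
    exact Subtype.ext (by rw [smul_def]; exact hkx.symm)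
  · rintro ⟨S, x, hx, rfl⟩
    exact ⟨Quotient.mk _ ⟨x, hx⟩, rfl⟩

/-- Fixed points of `k : C(g)` in `X^g` correspond to joint fixed points. -/
def fixEquiv (g : G) (k : Cg g) :
    MulAction.fixedBy (Fg X g) k ≃ {x : X // g • x = x ∧ (k : G) • x = x} where
  toFun x := ⟨x.1.1, x.1.2, congrArg Subtype.val x.2⟩
  invFun x := ⟨⟨x.1, x.2.1⟩, Subtype.ext x.2.2⟩
  left_inv x := rfl
  right_inv x := rfl

lemma key_conj (c a b : G) : (c * a * c⁻¹) * (c * b * c⁻¹) = c * (a * b) * c⁻¹ := by group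

lemma smul_conj (c k : G) (x : X) : (c * k * c⁻¹) • (c • x) = c • (k • x) := by
  rw [smul_smul, smul_smul]
  congr 1
  group

lemma conj_comm' (c : G) {a b : G} (h : a * b = b * a) :
    (c * a * c⁻¹) * (c * b * c⁻¹) = (c * b * c⁻¹) * (c * a * c⁻¹) := by
  rw [key_conj, key_conj, h]

lemma conj_comm'' {c g k' : G} (hk' : k' * (c * g * c⁻¹) = (c * g * c⁻¹) * k') :
    (c⁻¹ * k' * c) * g = g * (c⁻¹ * k' * c) := by
  have h1 := conj_comm' c⁻¹ hk'
  simp only [inv_inv] at h1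
  have h2 : c⁻¹ * (c * g * c⁻¹) * c = g := by group
  rwa [h2] at h1

/-- Conjugating an orbit set. -/
lemma mem_conj {c g : G} {S : Set X} (hS : S ∈ centralizerOrbits (X := X) g) :
    (fun y : X => c • y) '' S ∈ centralizerOrbits (X := X) (c * g * c⁻¹) := by
  obtain ⟨x, hx, rfl⟩ := hS
  refine ⟨c • x, ?_, ?_⟩
  · rw [smul_conj, hx]
  · ext z
    simp only [Set.mem_image, Set.mem_setOf_eq]
    constructor
    · rintro ⟨y, ⟨k, hk, rfl⟩, rfl⟩
      exact ⟨c * k * c⁻¹, by rw [key_conj, key_conj, hk], (smul_conj c k x).symm⟩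
    · rintro ⟨k', hk', rfl⟩
      refine ⟨(c⁻¹ * k' * c) • x, ⟨c⁻¹ * k' * c, conj_comm'' hk', rfl⟩, ?_⟩
      have h3 : c * (c⁻¹ * k' * c) * c⁻¹ = k' := by group
      rw [← smul_conj c (c⁻¹ * k' * c) x, h3]

lemma mem_conj_iff {c g : G} {S : Set X} :
    S ∈ centralizerOrbits (X := X) g ↔
      (fun y : X => c • y) '' S ∈ centralizerOrbits (X := X) (c * g * c⁻¹) := by
  constructor
  · exact mem_conj
  · intro h
    have h' := mem_conj (c := c⁻¹) h
    have himg : (fun y : X => c⁻¹ • y) '' ((fun y : X => c • y) '' S) = S := by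
      rw [Set.image_image]
      simp
    have hgrp : c⁻¹ * (c * g * c⁻¹) * c⁻¹⁻¹ = g := by group
    rwa [himg, hgrp] at h'

lemma card_orbits_conj (c g : G) :
    Nat.card (centralizerOrbits (X := X) (c * g * c⁻¹)) =
      Nat.card (centralizerOrbits (X := X) g) := by
  refine (Nat.card_congr (Equiv.subtypeEquiv (Equiv.Set.congr (MulAction.toPerm c))
    (fun S => ?_))).symm
  exact mem_conj_iff

lemma card_centralizer_conj (c g : G) :
    Nat.card (Cg (c * g * c⁻¹)) = Nat.card (Cg g) := by
  refine Nat.card_congr (Equiv.symm ?_)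
  refine ⟨fun k => ⟨c * k * c⁻¹, ?_⟩, fun k => ⟨c⁻¹ * k * c, ?_⟩, ?_, ?_⟩
  · rw [mem_Cg, key_conj, key_conj, mem_Cg.mp k.2]
  · rw [mem_Cg]
    exact conj_comm'' (mem_Cg.mp k.2)
  · intro k
    exact Subtype.ext (by group)
  · intro k
    exact Subtype.ext (by group)

variable [Fintype G] [DecidableEq G] [Fintype X]

/-- Burnside for the centralizer action on the fixed set. -/
lemma inner_sum (g : G) :
    ∑ h ∈ univ.filter (fun h : G => g * h = h * g),
        Nat.card {x : X // g • x = x ∧ h • x = x}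
      = Nat.card (centralizerOrbits (X := X) g) * Nat.card (Cg g) := by
  classical
  have hb := MulAction.sum_card_fixedBy_eq_card_orbits_mul_card_group (Cg g) (Fg X g)
  calc ∑ h ∈ univ.filter (fun h : G => g * h = h * g),
        Nat.card {x : X // g • x = x ∧ h • x = x}
      = ∑ k : Cg g, Nat.card {x : X // g • x = x ∧ (k : G) • x = x} := by
        rw [Finset.sum_subtype (p := fun h => h ∈ Cg g)]
        intro h
        simp [mem_Cg, eq_comm]
    _ = ∑ k : Cg g, Fintype.card (MulAction.fixedBy (Fg X g) k) := by
        refine Finset.sum_congr rfl fun k _ => ?_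
        rw [← Nat.card_eq_fintype_card, Nat.card_congr (fixEquiv g k)]
    _ = Fintype.card (Quotient (MulAction.orbitRel (Cg g) (Fg X g))) * Fintype.card (Cg g) := hb
    _ = Nat.card (centralizerOrbits (X := X) g) * Nat.card (Cg g) := by
        rw [← Nat.card_eq_fintype_card, ← Nat.card_eq_fintype_card,
          Nat.card_congr (quotEquiv (X := X) g)]

lemma class_size (r : G) :
    Nat.card {g : G // IsConj r g} * Nat.card (Cg r) = Nat.card G := by
  classical
  have hb := MulAction.card_orbit_mul_card_stabilizer_eq_card_group (ConjAct G) r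
  have h1 : Nat.card {g : G // IsConj r g} = Fintype.card (MulAction.orbit (ConjAct G) r) := by
    rw [← Nat.card_eq_fintype_card]
    exact Nat.card_congr (Equiv.subtypeEquivRight fun g => by
      rw [ConjAct.mem_orbit_conjAct, isConj_comm])
  have h2 : Nat.card (Cg r) = Fintype.card (MulAction.stabilizer (ConjAct G) r) := by
    rw [Subgroup.nat_card_centralizer_nat_card_stabilizer, Nat.card_eq_fintype_card]
  have h3 : Fintype.card (ConjAct G) = Nat.card G := by
    rw [← Nat.card_eq_fintype_card]
    exact Nat.card_congr ConjAct.ofConjAct.toEquiv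
  rw [h1, h2, ← h3, hb]

end StringyAux

open StringyAux in
/-- Stringy orbifold Euler characteristic identity (set-theoretic version):
`(1/|G|) Σ_{gh=hg} |X^{⟨g,h⟩}| = Σ_{[g]} |X^g / C(g)|`, where the second sum runs over
a transversal `R` of the conjugacy classes of `G`. -/
theorem stringy_euler_characteristic
    {G X : Type*} [Group G] [Fintype G] [DecidableEq G] [MulAction G X] [Fintype X]
    (R : Finset G) (hR : ∀ g : G, ∃! r : G, r ∈ R ∧ IsConj r g) :
    (1 / (Nat.card G : ℚ)) *
      ∑ p ∈ univ.filter (fun p : G × G => p.1 * p.2 = p.2 * p.1),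
        (Nat.card {x : X // p.1 • x = x ∧ p.2 • x = x} : ℚ) =
    ∑ r ∈ R, (Nat.card (centralizerOrbits (X := X) r) : ℚ) := by
  classical
  -- the natural-number identity
  have key : ∑ p ∈ univ.filter (fun p : G × G => p.1 * p.2 = p.2 * p.1),
        Nat.card {x : X // p.1 • x = x ∧ p.2 • x = x}
      = Nat.card G * ∑ r ∈ R, Nat.card (centralizerOrbits (X := X) r) := by
    have step1 : ∑ p ∈ univ.filter (fun p : G × G => p.1 * p.2 = p.2 * p.1),
          Nat.card {x : X // p.1 • x = x ∧ p.2 • x = x}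
        = ∑ g : G, (Nat.card (centralizerOrbits (X := X) g) * Nat.card (Cg g)) := by
      rw [Finset.sum_filter, Fintype.sum_prod_type]
      refine Finset.sum_congr rfl fun g _ => ?_
      rw [← inner_sum (X := X) g, Finset.sum_filter]
    rw [step1]
    -- partition by conjugacy classes
    have hmap : ∀ g : G, (hR g).choose ∈ R := fun g => (hR g).choose_spec.1.1
    rw [← Finset.sum_fiberwise_of_maps_to (g := fun g : G => (hR g).choose)
        (fun g _ => hmap g)
        (fun g : G => Nat.card (centralizerOrbits (X := X) g) * Nat.card (Cg g)),
      Finset.mul_sum]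
    refine Finset.sum_congr rfl fun r hr => ?_
    have hfib : univ.filter (fun g : G => (hR g).choose = r)
        = univ.filter (fun g : G => IsConj r g) := by
      ext g
      simp only [Finset.mem_filter, Finset.mem_univ, true_and]
      constructor
      · rintro rfl; exact (hR g).choose_spec.1.2
      · intro h; exact ((hR g).choose_spec.2 r ⟨hr, h⟩).symm ▸ rfl
    rw [hfib]
    have hconst : ∀ g ∈ univ.filter (fun g : G => IsConj r g),
        Nat.card (centralizerOrbits (X := X) g) * Nat.card (Cg g)
          = Nat.card (centralizerOrbits (X := X) r) * Nat.card (Cg r) := by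
      intro g hg
      obtain ⟨c, hc⟩ := (isConj_iff).mp (Finset.mem_filter.mp hg).2
      subst hc
      rw [card_orbits_conj, card_centralizer_conj]
    rw [Finset.sum_congr rfl hconst, Finset.sum_const]
    have hcard : (univ.filter (fun g : G => IsConj r g)).card
        = Nat.card {g : G // IsConj r g} := by
      rw [Nat.card_eq_fintype_card, Fintype.card_subtype]
    rw [smul_eq_mul, hcard, ← mul_assoc, mul_right_comm, class_size r]
  -- pass to ℚ
  have hG : (Nat.card G : ℚ) ≠ 0 := by
    simp [Nat.card_eq_fintype_card, Fintype.card_ne_zero]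
  have keyQ : (∑ p ∈ univ.filter (fun p : G × G => p.1 * p.2 = p.2 * p.1),
        (Nat.card {x : X // p.1 • x = x ∧ p.2 • x = x} : ℚ))
      = (Nat.card G : ℚ) * ∑ r ∈ R, (Nat.card (centralizerOrbits (X := X) r) : ℚ) := by
    rw [← Nat.cast_sum]
    rw [key]
    push_cast
    ring
  rw [keyQ]
  field_simp
end

section
/- If ω: G×G×G → A is a 3-coboundary, i.e., ω = dη for a 2-cochain η: G×G → A where (dη)(g₁,g₂,g₃) = η(g₂,g₃) − η(g₁g₂,g₃) + η(g₁,g₂g₃) − η(g₁,g₂) (with trivial G-action on A), then for pairwise commuting g₁,g₂,g₃ the antisymmetrized membrane phase φ(g₁,g₂,g₃) = Σ_{σ∈S₃} sign(σ)·ω(g_{σ(1)},g_{σ(2)},g_{σ(3)}) vanishes; hence φ descends to a well-defined function of the cohomology class of ω in H³(G,A). -/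
/-- The membrane phase: the full antisymmetrization (with signs) of a 3-cochain
`ω : G³ → A` evaluated on a triple `(v 0, v 1, v 2)`. -/
def membranePhase {G A : Type*} [Group G] [AddCommGroup A]
    (ω : G → G → G → A) (v : Fin 3 → G) : A :=
  ω (v 0) (v 1) (v 2) - ω (v 1) (v 0) (v 2) - ω (v 2) (v 1) (v 0)
    + ω (v 2) (v 0) (v 1) + ω (v 1) (v 2) (v 0) - ω (v 0) (v 2) (v 1)

/-- If the 3-cochain `ω` is a coboundary `ω = dη` (with trivial `G`-action on `A`),
then the antisymmetrized membrane phase vanishes on pairwise commuting triples;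
hence the phase only depends on the class of `ω` in `H³(G,A)`. -/
theorem membrane_phase_vanishes_on_coboundaries {G A : Type*} [Group G] [AddCommGroup A]
    (η : G → G → A) (ω : G → G → G → A)
    (hω : ∀ g₁ g₂ g₃ : G,
      ω g₁ g₂ g₃ = η g₂ g₃ - η (g₁ * g₂) g₃ + η g₁ (g₂ * g₃) - η g₁ g₂)
    (v : Fin 3 → G) (hcomm : ∀ i j : Fin 3, v i * v j = v j * v i) :
    membranePhase ω v = 0 := by
  have h01 := hcomm 0 1
  have h02 := hcomm 0 2
  have h12 := hcomm 1 2
  simp only [membranePhase, hω, h01, h02, h12]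
  abel
end
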